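/- arXiv:1312.6069 — 3 statements merged into one kernel-verified Lean document; each statement's English description precedes it below -/
import Mathlib

section
/- Let μ be a measure on a measurable space T and let f₁, f₂ ∈ L²(T,μ) be two nonzero functions with equal L² norms, i.e. μ(f₁²) = μ(f₂²) ≠ 0. Fix h ∈ (0,1/2) and define k_h(f,g) = (1/2)(μ(f²)^{2h} + μ(g²)^{2h} − μ(|f−g|²)^{2h}). If there is λ ∈ ℝ with k_h(f₁,g) = λ·k_h(f₂,g) for all g ∈ L²(T,μ), and if there exists g orthogonal to both f₁ and f₂ with μ(g²) = μ(f₁²), then λ² = 1; moreover λ = −1 is impossible (since it would force 4·μ(f₁²)^{2h} = 2^{2h+1}·μ(f₁²)^{2h}), so λ = 1 and f₁ = f₂. -/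
open MeasureTheory

lemma memLp_mul_integrable {T : Type*} [MeasurableSpace T] {μ : Measure T}
    {f g : T → ℝ} (hf : MemLp f 2 μ) (hg : MemLp g 2 μ) :
    Integrable (fun x => f x * g x) μ := by
  have h1 : Integrable (fun x => (f x + g x) ^ 2) μ := (hf.add hg).integrable_sq
  have h2 : Integrable (fun x => f x ^ 2) μ := hf.integrable_sq
  have h3 : Integrable (fun x => g x ^ 2) μ := hg.integrable_sq
  have : (fun x => f x * g x)
      = fun x => (((f x + g x) ^ 2 - f x ^ 2) - g x ^ 2) / 2 := by
    funext x; ring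
  rw [this]
  exact ((h1.sub h2).sub h3).div_const 2

lemma expand_sq {T : Type*} [MeasurableSpace T] {μ : Measure T}
    {f g : T → ℝ} (hf : MemLp f 2 μ) (hg : MemLp g 2 μ) :
    ∫ x, (f x - g x) ^ 2 ∂μ
      = ∫ x, f x ^ 2 ∂μ - 2 * ∫ x, f x * g x ∂μ + ∫ x, g x ^ 2 ∂μ := by
  have h2 : Integrable (fun x => f x ^ 2) μ := hf.integrable_sq
  have h3 : Integrable (fun x => g x ^ 2) μ := hg.integrable_sq
  have h4 : Integrable (fun x => f x * g x) μ := memLp_mul_integrable hf hg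
  have e0 : ∫ x, (f x - g x) ^ 2 ∂μ
      = ∫ x, (f x ^ 2 + g x ^ 2 - 2 * (f x * g x)) ∂μ := by
    congr 1; funext x; ring
  have e1 : ∫ x, (f x ^ 2 + g x ^ 2 - 2 * (f x * g x)) ∂μ
      = (∫ x, (f x ^ 2 + g x ^ 2) ∂μ) - ∫ x, 2 * (f x * g x) ∂μ :=
    integral_sub (h2.add h3) (h4.const_mul 2)
  have e2 : ∫ x, (f x ^ 2 + g x ^ 2) ∂μ = (∫ x, f x ^ 2 ∂μ) + ∫ x, g x ^ 2 ∂μ :=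
    integral_add h2 h3
  have e3 : ∫ x, 2 * (f x * g x) ∂μ = 2 * ∫ x, f x * g x ∂μ :=
    integral_const_mul 2 _
  rw [e0, e1, e2, e3]; ring

/-- If `f₁, f₂` are nonzero `L²` functions with the same norm, `h ∈ (0,1/2)`, and
`k_h(f₁,·) = λ k_h(f₂,·)` on `L²`, and if some `g ∈ L²` orthogonal to `f₁, f₂`
has `μ(g²) = μ(f₁²)`, then `λ = 1` and `f₁ = f₂` (a.e.). -/
theorem stmt_3 {T : Type*} [MeasurableSpace T] (μ : Measure T)
    (h : ℝ) (hh : h ∈ Set.Ioo (0 : ℝ) (1 / 2))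
    (f₁ f₂ : T → ℝ) (hf₁ : MemLp f₁ 2 μ) (hf₂ : MemLp f₂ 2 μ)
    (heq : ∫ x, f₁ x ^ 2 ∂μ = ∫ x, f₂ x ^ 2 ∂μ)
    (hne : ∫ x, f₁ x ^ 2 ∂μ ≠ 0)
    (k : (T → ℝ) → (T → ℝ) → ℝ)
    (hk : ∀ f g : T → ℝ, k f g =
      (1 / 2) * ((∫ x, f x ^ 2 ∂μ) ^ (2 * h) + (∫ x, g x ^ 2 ∂μ) ^ (2 * h)
        - (∫ x, (f x - g x) ^ 2 ∂μ) ^ (2 * h)))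
    (lam : ℝ)
    (hlam : ∀ g : T → ℝ, MemLp g 2 μ → k f₁ g = lam * k f₂ g)
    (hg : ∃ g : T → ℝ, MemLp g 2 μ ∧ (∫ x, g x * f₁ x ∂μ) = 0 ∧
      (∫ x, g x * f₂ x ∂μ) = 0 ∧ (∫ x, g x ^ 2 ∂μ) = ∫ x, f₁ x ^ 2 ∂μ) :
    lam ^ 2 = 1 ∧ lam = 1 ∧ f₁ =ᵐ[μ] f₂ := by
  obtain ⟨g, hgL, hgo1, hgo2, hgA⟩ := hg
  set A := ∫ x, f₁ x ^ 2 ∂μ with hA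
  have hApos : 0 < A := lt_of_le_of_ne (integral_nonneg fun x => sq_nonneg _) (Ne.symm hne)
  have hhpos : 0 < h := hh.1
  have hhlt : h < 1 / 2 := hh.2
  have h2h0 : 2 * h ≠ 0 := by positivity
  -- ∫ (f₁ - g)² = 2A  and  ∫ (f₂ - g)² = 2A
  have hcom1 : ∫ x, f₁ x * g x ∂μ = 0 := by
    rw [show (fun x => f₁ x * g x) = fun x => g x * f₁ x by funext x; ring] at *
    exact hgo1
  have hcom2 : ∫ x, f₂ x * g x ∂μ = 0 := by
    rw [show (fun x => f₂ x * g x) = fun x => g x * f₂ x by funext x; ring] at *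
    exact hgo2
  have hD1 : ∫ x, (f₁ x - g x) ^ 2 ∂μ = 2 * A := by
    rw [expand_sq hf₁ hgL, hcom1, hgA]; ring
  have hD2 : ∫ x, (f₂ x - g x) ^ 2 ∂μ = 2 * A := by
    rw [expand_sq hf₂ hgL, hcom2, hgA, ← heq]; ring
  -- key: both sides of hlam g equal c := (1/2)(2 A^{2h} - (2A)^{2h}), and c ≠ 0
  have hP : (0:ℝ) < A ^ (2 * h) := Real.rpow_pos_of_pos hApos _
  have h2pow : (2:ℝ) ^ (2 * h) < 2 := by
    calc (2:ℝ) ^ (2 * h) < 2 ^ (1:ℝ) :=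
          Real.rpow_lt_rpow_of_exponent_lt one_lt_two (by linarith)
    _ = 2 := Real.rpow_one 2
  have h2A : (2 * A) ^ (2 * h) = 2 ^ (2 * h) * A ^ (2 * h) :=
    Real.mul_rpow (by norm_num) hApos.le
  have hcne : (1 / 2 : ℝ) * (A ^ (2 * h) + A ^ (2 * h) - (2 * A) ^ (2 * h)) ≠ 0 := by
    rw [h2A]
    nlinarith [hP, h2pow]
  have hkey := hlam g hgL
  rw [hk, hk, hD1, hD2, hgA, ← heq, ← hA] at hkey
  have hlam1 : lam = 1 := by
    by_contra hl
    apply hcne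
    have h1l : (1 - lam) ≠ 0 := fun hc => hl (by linarith [sub_eq_zero.mp hc])
    have : (1 - lam) * ((1 / 2 : ℝ) * (A ^ (2 * h) + A ^ (2 * h) - (2 * A) ^ (2 * h))) = 0 := by
      linarith [hkey]
    exact (mul_eq_zero.mp this).resolve_left h1l
  refine ⟨by rw [hlam1]; norm_num, hlam1, ?_⟩
  -- now use g = f₁ in hlam
  have hkey2 := hlam f₁ hf₁
  rw [hlam1, one_mul, hk, hk, ← hA, ← heq] at hkey2
  have hz : ∫ x, (f₁ x - f₁ x) ^ 2 ∂μ = 0 := by simp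
  rw [hz, Real.zero_rpow h2h0] at hkey2
  have hDnn : 0 ≤ ∫ x, (f₂ x - f₁ x) ^ 2 ∂μ := integral_nonneg fun x => sq_nonneg _
  have hDpow : (∫ x, (f₂ x - f₁ x) ^ 2 ∂μ) ^ (2 * h) = 0 := by linarith
  have hD0 : ∫ x, (f₂ x - f₁ x) ^ 2 ∂μ = 0 := by
    rcases (Real.rpow_eq_zero hDnn h2h0).mp hDpow with h'
    exact h'
  have hint : Integrable (fun x => (f₂ x - f₁ x) ^ 2) μ := (hf₂.sub hf₁).integrable_sq
  have := (integral_eq_zero_iff_of_nonneg (fun x => sq_nonneg _) hint).mp hD0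
  have hae : (fun x => (f₂ x - f₁ x) ^ 2) =ᵐ[μ] 0 := this
  filter_upwards [hae] with x hx
  have : (f₂ x - f₁ x) ^ 2 = 0 := hx
  have := pow_eq_zero_iff (n := 2) (by norm_num) |>.mp this
  linarith [sub_eq_zero.mp this]
end

section
/- Let Y be a random variable which, given a sigma-field G, is centered Gaussian with conditional variance ≥ σ² > 0 a.s. Then P(|Y| ≤ ε | G) ≤ Φ(ε/σ) a.s., where Φ is the standard normal CDF. Consequently, if Y_1, …, Y_n are random variables such that each Y_k is centered Gaussian given Y_1, …, Y_{k−1} with conditional variance ≥ σ², then by iterated conditioning P(∀k ≤ n, |Y_k| ≤ ε) ≤ Φ(ε/σ)^n. -/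
open MeasureTheory ProbabilityTheory
open scoped ENNReal NNReal

/-- The standard normal cumulative distribution function. -/
noncomputable def stdGaussianCDF (x : ℝ) : ℝ :=
  (gaussianReal 0 1 (Set.Iic x)).toReal

lemma stdGaussianCDF_nonneg (x : ℝ) : 0 ≤ stdGaussianCDF x := ENNReal.toReal_nonneg

lemma gauss_bound (σ ε : ℝ) (hσ : 0 < σ) (hε : 0 ≤ ε) (v : ℝ≥0) (hv : σ ^ 2 ≤ (v : ℝ)) :
    gaussianReal 0 v {y : ℝ | |y| ≤ ε} ≤ ENNReal.ofReal (stdGaussianCDF (ε / σ)) := by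
  have hv0 : (0:ℝ) < (v:ℝ) := lt_of_lt_of_le (by positivity) hv
  set c : ℝ := Real.sqrt v with hc
  have hcpos : 0 < c := Real.sqrt_pos.mpr hv0
  have hmap : (gaussianReal 0 1).map (c * ·) = gaussianReal 0 v := by
    rw [gaussianReal_map_const_mul c]
    congr 1
    · simp
    · ext
      simp [hc, Real.sq_sqrt hv0.le]
  have h1 : gaussianReal 0 v {y : ℝ | |y| ≤ ε} ≤ gaussianReal 0 v (Set.Iic ε) :=
    measure_mono fun y hy => le_trans (le_abs_self y) hy
  have h2 : gaussianReal 0 v (Set.Iic ε) = gaussianReal 0 1 (Set.Iic (ε / c)) := by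
    rw [← hmap, Measure.map_apply (measurable_const_mul c) measurableSet_Iic]
    congr 1
    ext x
    simp only [Set.mem_preimage, Set.mem_Iic]
    rw [le_div_iff₀ hcpos, mul_comm]
  have h3 : gaussianReal 0 1 (Set.Iic (ε / c)) ≤ gaussianReal 0 1 (Set.Iic (ε / σ)) := by
    refine measure_mono (Set.Iic_subset_Iic.mpr ?_)
    exact div_le_div_of_nonneg_left hε hσ ((Real.le_sqrt hσ.le v.coe_nonneg).mpr hv)
  calc gaussianReal 0 v {y : ℝ | |y| ≤ ε} ≤ gaussianReal 0 1 (Set.Iic (ε / σ)) :=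
        le_trans h1 (h2 ▸ h3)
    _ = ENNReal.ofReal (stdGaussianCDF (ε / σ)) := by
        rw [stdGaussianCDF, ENNReal.ofReal_toReal (measure_ne_top _ _)]

/-- One-step version: if `Y` is conditionally centered Gaussian given `X` with
conditional variance at least `σ² > 0`, then the conditional probability of
`{|Y| ≤ ε}` is at most `Φ(ε/σ)`; iterating the conditioning on `Y_0,…,Y_{k-1}`
yields `P(∀ k < n, |Y_k| ≤ ε) ≤ Φ(ε/σ)^n`. -/
theorem stmt_13 {Ω β : Type*} [MeasurableSpace Ω]
    [MeasurableSpace β] [StandardBorelSpace β] [Nonempty β]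
    (μ : Measure Ω) [IsProbabilityMeasure μ]
    (σ ε : ℝ) (hσ : 0 < σ) (hε : 0 ≤ ε) :
    (∀ (Y : Ω → ℝ) (X : Ω → β), Measurable Y → Measurable X →
      (∃ V : β → ℝ≥0, ∀ᵐ ω ∂μ,
        condDistrib Y X μ (X ω) = gaussianReal 0 (V (X ω)) ∧
          σ ^ 2 ≤ (V (X ω) : ℝ)) →
      ∀ᵐ ω ∂μ, condDistrib Y X μ (X ω) {y : ℝ | |y| ≤ ε} ≤
        ENNReal.ofReal (stdGaussianCDF (ε / σ))) ∧
    (∀ (n : ℕ) (Y : ℕ → Ω → ℝ), (∀ k, Measurable (Y k)) →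
      (∀ k < n, ∃ V : (Fin k → ℝ) → ℝ≥0, ∀ᵐ ω ∂μ,
        condDistrib (Y k) (fun ω (j : Fin k) => Y j ω) μ (fun j => Y j ω) =
            gaussianReal 0 (V (fun j => Y j ω)) ∧
          σ ^ 2 ≤ (V (fun j => Y j ω) : ℝ)) →
      μ {ω | ∀ k < n, |Y k ω| ≤ ε} ≤
        ENNReal.ofReal (stdGaussianCDF (ε / σ) ^ n)) := by
  constructor
  · rintro Y X hY hX ⟨V, hV⟩
    filter_upwards [hV] with ω ⟨h1, h2⟩
    rw [h1]
    exact gauss_bound σ ε hσ hε _ h2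
  · intro n
    induction n with
    | zero =>
      intro Y hY h
      have : {ω | ∀ k < 0, |Y k ω| ≤ ε} = Set.univ := by ext ω; simp
      rw [this]
      simp
    | succ n ih =>
      intro Y hY h
      obtain ⟨V, hV⟩ := h n (Nat.lt_succ_self n)
      set X : Ω → (Fin n → ℝ) := fun ω j => Y j ω with hXdef
      have hXm : Measurable X := measurable_pi_lambda _ fun j => hY j
      set t : Set (Fin n → ℝ) := {x | ∀ j, |x j| ≤ ε} with ht
      have htm : MeasurableSet t := by
        have : t = ⋂ j, {x : Fin n → ℝ | |x j| ≤ ε} := by ext x; simp [ht]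
        rw [this]
        exact MeasurableSet.iInter fun j =>
          measurableSet_le (measurable_pi_apply j).abs measurable_const
      have hsm : MeasurableSet {y : ℝ | |y| ≤ ε} :=
        measurableSet_le measurable_abs measurable_const
      have hset : {ω | ∀ k < n + 1, |Y k ω| ≤ ε} = X ⁻¹' t ∩ (Y n) ⁻¹' {y | |y| ≤ ε} := by
        ext ω
        simp only [Set.mem_setOf_eq, Set.mem_inter_iff, Set.mem_preimage, ht, hXdef]
        constructor
        · intro hh
          exact ⟨fun j => hh j (lt_trans j.2 (Nat.lt_succ_self n)), hh n (Nat.lt_succ_self n)⟩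
        · rintro ⟨h1, h2⟩ k hk
          rcases Nat.lt_succ_iff_lt_or_eq.mp hk with hk' | rfl
          · exact h1 ⟨k, hk'⟩
          · exact h2
      have hXt : X ⁻¹' t = {ω | ∀ k < n, |Y k ω| ≤ ε} := by
        ext ω
        simp only [Set.mem_preimage, ht, Set.mem_setOf_eq, hXdef]
        constructor
        · intro hh k hk; exact hh ⟨k, hk⟩
        · intro hh j; exact hh j j.2
      rw [hset, ← setLIntegral_preimage_condDistrib hXm (hY n).aemeasurable hsm htm]
      have hbound : ∀ᵐ ω ∂μ, condDistrib (Y n) X μ (X ω) {y : ℝ | |y| ≤ ε} ≤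
          ENNReal.ofReal (stdGaussianCDF (ε / σ)) := by
        filter_upwards [hV] with ω ⟨h1, h2⟩
        have h1' : condDistrib (Y n) X μ (X ω) = gaussianReal 0 (V (X ω)) := h1
        have h2' : σ ^ 2 ≤ (V (X ω) : ℝ) := h2
        rw [h1']
        exact gauss_bound σ ε hσ hε _ h2'
      calc ∫⁻ a in X ⁻¹' t, condDistrib (Y n) X μ (X a) {y : ℝ | |y| ≤ ε} ∂μ
          ≤ ∫⁻ _ in X ⁻¹' t, ENNReal.ofReal (stdGaussianCDF (ε / σ)) ∂μ :=
            lintegral_mono_ae (ae_restrict_of_ae hbound)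
        _ = ENNReal.ofReal (stdGaussianCDF (ε / σ)) * μ (X ⁻¹' t) := by
            rw [setLIntegral_const]
        _ ≤ ENNReal.ofReal (stdGaussianCDF (ε / σ)) *
              ENNReal.ofReal (stdGaussianCDF (ε / σ) ^ n) := by
            gcongr
            rw [hXt]
            exact ih Y hY fun k hk => h k (lt_trans hk (Nat.lt_succ_self n))
        _ = ENNReal.ofReal (stdGaussianCDF (ε / σ) ^ (n + 1)) := by
            rw [ENNReal.ofReal_pow (stdGaussianCDF_nonneg _),
              ENNReal.ofReal_pow (stdGaussianCDF_nonneg _), pow_succ']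
end

section
/- Let d ∈ (0,1] and define, for s,t ∈ [0,∞), R(s,t) = (1/2)(s^{d} + t^{d} − |s−t|^{d}). Then R is a positive semidefinite kernel on [0,∞); i.e. for all n, all t₁,…,t_n ∈ [0,∞) and all λ₁,…,λ_n ∈ ℝ, Σ_{i,j} λ_i λ_j R(t_i,t_j) ≥ 0. -/
open Real MeasureTheory Set

namespace FbmAux

/-- The integrand of the Lévy–Khintchine style representation. -/
noncomputable def K (d x u : ℝ) : ℝ := (1 - Real.cos (x * u)) * u ^ (-1 - d)

lemma K_nonneg {d x u : ℝ} (hu : 0 < u) : 0 ≤ K d x u :=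
  mul_nonneg (by nlinarith [Real.cos_le_one (x * u)]) (Real.rpow_nonneg hu.le _)

lemma aesm_K (d x : ℝ) :
    AEStronglyMeasurable (K d x) (volume.restrict (Ioi (0:ℝ))) := by
  have hcont : ContinuousOn (K d x) (Ioi 0) := by
    apply ContinuousOn.mul
    · exact (continuous_const.sub
        (Real.continuous_cos.comp (continuous_const.mul continuous_id))).continuousOn
    · exact ContinuousOn.rpow_const continuousOn_id (fun u hu => Or.inl (ne_of_gt hu))
  exact hcont.aestronglyMeasurable measurableSet_Ioi

lemma integrableOn_K (d : ℝ) (hd0 : 0 < d) (hd1 : d ≤ 1) (x : ℝ) :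
    IntegrableOn (K d x) (Ioi 0) := by
  have hmeas := aesm_K d x
  rw [← Ioc_union_Ioi_eq_Ioi (zero_le_one : (0:ℝ) ≤ 1)]
  apply IntegrableOn.union
  · -- on (0,1] : dominated by (x^2/2) * u^(1-d)
    have hint : IntegrableOn (fun u : ℝ => x ^ 2 / 2 * u ^ (1 - d)) (Ioc 0 1) := by
      have h := intervalIntegral.intervalIntegrable_rpow' (a := 0) (b := 1)
        (r := 1 - d) (by linarith)
      rw [intervalIntegrable_iff_integrableOn_Ioc_of_le zero_le_one] at h
      exact h.const_mul _
    refine Integrable.mono hint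
      (hmeas.mono_measure (Measure.restrict_mono Ioc_subset_Ioi_self le_rfl)) ?_
    filter_upwards [ae_restrict_mem measurableSet_Ioc] with u hu
    rcases hu with ⟨hu0, hu1⟩
    rw [Real.norm_eq_abs, abs_of_nonneg (K_nonneg hu0), Real.norm_eq_abs]
    have h2 : 1 - Real.cos (x * u) ≤ (x * u) ^ 2 / 2 := by
      have := Real.one_sub_sq_div_two_le_cos (x := x * u); linarith
    have h3 : K d x u ≤ (x * u) ^ 2 / 2 * u ^ (-1 - d) :=
      mul_le_mul_of_nonneg_right h2 (Real.rpow_nonneg hu0.le _)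
    have h4 : (x * u) ^ 2 / 2 * u ^ (-1 - d) = x ^ 2 / 2 * u ^ (1 - d) := by
      have hu2 : (u : ℝ) ^ (2:ℕ) * u ^ (-1 - d) = u ^ (1 - d) := by
        rw [← Real.rpow_natCast u 2, ← Real.rpow_add hu0]
        congr 1; push_cast; ring
      calc (x * u) ^ 2 / 2 * u ^ (-1 - d) = x ^ 2 / 2 * ((u:ℝ) ^ (2:ℕ) * u ^ (-1 - d)) := by ring
        _ = x ^ 2 / 2 * u ^ (1 - d) := by rw [hu2]
    calc K d x u ≤ (x * u) ^ 2 / 2 * u ^ (-1 - d) := h3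
      _ = x ^ 2 / 2 * u ^ (1 - d) := h4
      _ ≤ |x ^ 2 / 2 * u ^ (1 - d)| := le_abs_self _
  · -- on (1,∞) : dominated by 2 * u^(-1-d)
    have hint : IntegrableOn (fun u : ℝ => 2 * u ^ (-1 - d)) (Ioi 1) :=
      (integrableOn_Ioi_rpow_of_lt (by linarith) one_pos).const_mul 2
    refine Integrable.mono hint
      (hmeas.mono_measure (Measure.restrict_mono (Ioi_subset_Ioi zero_le_one) le_rfl)) ?_
    filter_upwards [ae_restrict_mem measurableSet_Ioi] with u hu
    have hu0 : (0:ℝ) < u := lt_trans one_pos hu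
    rw [Real.norm_eq_abs, abs_of_nonneg (K_nonneg hu0), Real.norm_eq_abs]
    have h2 : 1 - Real.cos (x * u) ≤ 2 := by
      have := Real.neg_one_le_cos (x * u); linarith
    calc K d x u ≤ 2 * u ^ (-1 - d) :=
          mul_le_mul_of_nonneg_right h2 (Real.rpow_nonneg hu0.le _)
      _ ≤ |2 * u ^ (-1 - d)| := le_abs_self _

/-- The normalization constant. -/
noncomputable def C (d : ℝ) : ℝ := ∫ u in Ioi (0:ℝ), K d 1 u

lemma integral_K (d : ℝ) (hd0 : 0 < d) (hd1 : d ≤ 1) {x : ℝ} (hx : 0 ≤ x) :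
    ∫ u in Ioi (0:ℝ), K d x u = x ^ d * C d := by
  rcases eq_or_lt_of_le hx with rfl | hx
  · simp [K, Real.zero_rpow hd0.ne']
  · have key : ∀ u ∈ Ioi (0:ℝ), K d x u = x ^ (1 + d) * K d 1 (x * u) := by
      intro u hu
      have hu0 : (0:ℝ) < u := hu
      simp only [K, one_mul]
      rw [Real.mul_rpow hx.le hu0.le]
      rw [show x ^ (1 + d) * ((1 - Real.cos (x * u)) * (x ^ (-1 - d) * u ^ (-1 - d)))
        = (x ^ (1 + d) * x ^ (-1 - d)) * ((1 - Real.cos (x * u)) * u ^ (-1 - d)) by ring]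
      rw [← Real.rpow_add hx]
      norm_num
    rw [setIntegral_congr_fun measurableSet_Ioi key, integral_const_mul,
      integral_comp_mul_left_Ioi (K d 1) 0 hx, mul_zero]
    rw [smul_eq_mul, ← mul_assoc]
    congr 1
    rw [← Real.rpow_neg_one x, ← Real.rpow_add hx]
    ring_nf

lemma C_pos (d : ℝ) (hd0 : 0 < d) (hd1 : d ≤ 1) : 0 < C d := by
  have hK := integrableOn_K d hd0 hd1 1
  have hsub : Ioc (π/2) π ⊆ Ioi (0:ℝ) := fun u hu =>
    lt_trans (by positivity) hu.1
  have step1 : ∫ u in Ioc (π/2) π, K d 1 u ≤ C d := by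
    apply setIntegral_mono_set hK
    · filter_upwards [ae_restrict_mem measurableSet_Ioi] with u hu
      exact K_nonneg hu
    · exact HasSubset.Subset.eventuallyLE hsub
  have step2 : ∫ u in Ioc (π/2) π, (π:ℝ) ^ (-1 - d) ≤ ∫ u in Ioc (π/2) π, K d 1 u := by
    apply setIntegral_mono_on
    · exact integrableOn_const (by rw [Real.volume_Ioc]; exact ENNReal.ofReal_ne_top)
    · exact hK.mono_set hsub
    · exact measurableSet_Ioc
    · intro u hu
      have hu0 : (0:ℝ) < u := hsub hu
      have hcos : Real.cos u ≤ 0 :=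
        Real.cos_nonpos_of_pi_div_two_le_of_le hu.1.le (by linarith [hu.2, Real.pi_pos])
      have h1 : (1:ℝ) ≤ 1 - Real.cos (1 * u) := by rw [one_mul]; linarith
      have h2 : (π:ℝ) ^ (-1 - d) ≤ u ^ (-1 - d) :=
        Real.rpow_le_rpow_of_nonpos hu0 hu.2 (by linarith)
      calc (π:ℝ) ^ (-1 - d) ≤ u ^ (-1 - d) := h2
        _ = 1 * u ^ (-1 - d) := (one_mul _).symm
        _ ≤ (1 - Real.cos (1 * u)) * u ^ (-1 - d) :=
            mul_le_mul_of_nonneg_right h1 (Real.rpow_nonneg hu0.le _)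
  have step3 : (0:ℝ) < ∫ u in Ioc (π/2) π, (π:ℝ) ^ (-1 - d) := by
    rw [setIntegral_const, measureReal_def, Real.volume_Ioc, smul_eq_mul]
    have hπ : (0:ℝ) < π - π/2 := by linarith [Real.pi_pos]
    have hπ2 : (0:ℝ) < (π:ℝ) ^ (-1 - d) := Real.rpow_pos_of_pos Real.pi_pos _
    rw [ENNReal.toReal_ofReal hπ.le]
    positivity
  linarith

end FbmAux

open FbmAux

/-- For `d ∈ (0,1]`, the kernel `R(s,t) = (s^d + t^d - |s-t|^d)/2` is positive
semidefinite on `[0,∞)` (covariance of fractional Brownian motion). -/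
theorem stmt_14 (d : ℝ) (hd0 : 0 < d) (hd1 : d ≤ 1) (n : ℕ)
    (t : Fin n → ℝ) (ht : ∀ i, 0 ≤ t i) (lam : Fin n → ℝ) :
    0 ≤ ∑ i, ∑ j, lam i * lam j *
      ((1 : ℝ) / 2 * (t i ^ d + t j ^ d - |t i - t j| ^ d)) := by
  classical
  have hC := C_pos d hd0 hd1
  rw [← mul_nonneg_iff_of_pos_right hC]
  have habs : ∀ i j : Fin n, ∫ u in Ioi (0:ℝ), K d |t i - t j| u
      = ∫ u in Ioi (0:ℝ), K d (t i - t j) u := by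
    intro i j
    apply setIntegral_congr_fun measurableSet_Ioi
    intro u hu
    have hu0 : (0:ℝ) < u := hu
    simp only [K]
    rw [show |t i - t j| * u = |(t i - t j) * u| by
      rw [abs_mul, abs_of_pos hu0], Real.cos_abs]
  have hrep : ∀ i j : Fin n, lam i * lam j *
      ((1 : ℝ) / 2 * (t i ^ d + t j ^ d - |t i - t j| ^ d)) * C d
      = ∫ u in Ioi (0:ℝ), lam i * lam j * ((1:ℝ)/2) *
          (K d (t i) u + K d (t j) u - K d (t i - t j) u) := by
    intro i j
    have e1 := integral_K d hd0 hd1 (ht i)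
    have e2 := integral_K d hd0 hd1 (ht j)
    have e3 := integral_K d hd0 hd1 (abs_nonneg (t i - t j))
    rw [habs i j] at e3
    rw [show lam i * lam j * ((1 : ℝ) / 2 * (t i ^ d + t j ^ d - |t i - t j| ^ d)) * C d
      = lam i * lam j * ((1:ℝ)/2) *
        (t i ^ d * C d + t j ^ d * C d - |t i - t j| ^ d * C d) by ring,
      ← e1, ← e2, ← e3]
    have hadd : Integrable (fun u => K d (t i) u + K d (t j) u)
        (volume.restrict (Ioi (0:ℝ))) :=
      (integrableOn_K d hd0 hd1 (t i)).add (integrableOn_K d hd0 hd1 (t j))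
    rw [← integral_add (integrableOn_K d hd0 hd1 (t i)) (integrableOn_K d hd0 hd1 (t j)),
      ← integral_sub hadd (integrableOn_K d hd0 hd1 (t i - t j)),
      ← integral_const_mul]
  have hint : ∀ (i j : Fin n), IntegrableOn (fun u => lam i * lam j * ((1:ℝ)/2) *
      (K d (t i) u + K d (t j) u - K d (t i - t j) u)) (Ioi (0:ℝ)) := by
    intro i j
    exact (((integrableOn_K d hd0 hd1 (t i)).add
      (integrableOn_K d hd0 hd1 (t j))).sub (integrableOn_K d hd0 hd1 (t i - t j))).const_mul _
  calc (0:ℝ) ≤ ∫ u in Ioi (0:ℝ), ∑ i, ∑ j, lam i * lam j * ((1:ℝ)/2) *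
        (K d (t i) u + K d (t j) u - K d (t i - t j) u) := by
        apply setIntegral_nonneg measurableSet_Ioi
        intro u hu
        have hu0 : (0:ℝ) < u := hu
        set A : Fin n → ℝ := fun i => lam i * (Real.cos (t i * u) - 1) with hA
        set B : Fin n → ℝ := fun i => lam i * Real.sin (t i * u) with hB
        have hpt : ∀ i j : Fin n, lam i * lam j * ((1:ℝ)/2) *
            (K d (t i) u + K d (t j) u - K d (t i - t j) u)
            = ((1:ℝ)/2 * u ^ (-1 - d)) * (A i * A j)
              + ((1:ℝ)/2 * u ^ (-1 - d)) * (B i * B j) := by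
          intro i j
          simp only [K, hA, hB]
          rw [show (t i - t j) * u = t i * u - t j * u from sub_mul _ _ _, Real.cos_sub]
          ring
        simp only [hpt, Finset.sum_add_distrib, ← Finset.mul_sum, ← Finset.sum_mul_sum]
        have hc : (0:ℝ) ≤ (1:ℝ)/2 * u ^ (-1 - d) :=
          mul_nonneg (by norm_num) (Real.rpow_nonneg hu0.le _)
        rw [← Finset.sum_mul, ← Finset.sum_mul]
        exact add_nonneg (mul_nonneg hc (mul_self_nonneg (∑ i, A i)))
          (mul_nonneg hc (mul_self_nonneg (∑ i, B i)))
      _ = ∑ i, ∑ j, lam i * lam j * ((1 : ℝ) / 2 *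
            (t i ^ d + t j ^ d - |t i - t j| ^ d)) * C d := by
        rw [integral_finset_sum _ (fun i _ => integrable_finset_sum _ (fun j _ => hint i j))]
        refine Finset.sum_congr rfl fun i _ => ?_
        rw [integral_finset_sum _ (fun j _ => hint i j)]
        exact Finset.sum_congr rfl fun j _ => (hrep i j).symm
      _ = (∑ i, ∑ j, lam i * lam j * ((1 : ℝ) / 2 *
            (t i ^ d + t j ^ d - |t i - t j| ^ d))) * C d := by
        rw [Finset.sum_mul]
        exact Finset.sum_congr rfl fun i _ => by rw [Finset.sum_mul]
end
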